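/- Let F be a field of characteristic 2. There exist σ, τ ∈ 𝒩(F) with σ ∘ σ = τ ∘ τ = t, σ ∘ τ = τ ∘ σ, σ ≠ t, τ ≠ t, σ ≠ τ, and d(σ) = d(τ) = d(σ ∘ τ) = 1 (i.e., the Klein four-group Z/2 × Z/2 embeds into 𝒩(F) with all three nontrivial elements of depth 1) if and only if F ≠ F₂, i.e., if and only if F has more than two elements. -/

import Mathlib

open PowerSeries

/-- Composition of power series `σ ∘ τ` (substitution of `τ` into `σ`), valid when
`τ` has zero constant coefficient. -/
noncomputable def ngComp {F : Type*} [CommRing F] (σ τ : PowerSeries F) : PowerSeries F :=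
  PowerSeries.mk fun k =>
    ∑ n ∈ Finset.range (k + 1), PowerSeries.coeff n σ * PowerSeries.coeff k (τ ^ n)

/-- Membership in the Nottingham group: `σ ≡ t (mod t²)`. -/
def IsNott {F : Type*} [CommRing F] (σ : PowerSeries F) : Prop :=
  PowerSeries.coeff 0 σ = 0 ∧ PowerSeries.coeff 1 σ = 1

/-- `σ` has depth `m`, i.e. `ord_t (σ - t) = m + 1`. -/
def HasDepth {F : Type*} [CommRing F] (σ : PowerSeries F) (m : ℕ) : Prop :=
  (∀ i < m + 1, PowerSeries.coeff i (σ - PowerSeries.X) = 0) ∧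
    PowerSeries.coeff (m + 1) (σ - PowerSeries.X) ≠ 0

/-!
The series `t/(1 - a t)` are the conjugates of the translations `u ↦ u - a` under `u = 1/t`,
so `a ↦ t/(1 - a t)` embeds the additive group of `F` into `𝒩(F)`, with depth `1` exactly when
`a ≠ 0`. In characteristic `2` this group has exponent `2`, so any `x ∉ {0, 1}` gives the Klein
group `{0, 1, x, 1 + x}`. Conversely, the coefficient of `t²` is additive on `𝒩(F)`, so depth `1`
for `σ`, `τ` and `σ ∘ τ` says that `a = [t²]σ`, `b = [t²]τ` and `a + b` are nonzero, and then
`a / b ∉ {0, 1}`.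
-/

section

variable {F : Type*} [CommRing F]

lemma ngComp_eq_subst (σ : F⟦X⟧) {τ : F⟦X⟧} (hτ : constantCoeff τ = 0) :
    ngComp σ τ = σ.subst τ := by
  ext k
  rw [ngComp, coeff_mk, coeff_subst' (HasSubst.of_constantCoeff_zero' hτ),
    finsum_eq_sum_of_support_subset _ (s := Finset.range (k + 1))]
  · rfl
  · intro n hn
    by_contra hk
    refine hn ?_
    simp only [Finset.coe_range, Set.mem_Iio, not_lt] at hk
    change coeff n σ • coeff k (τ ^ n) = 0
    rw [coeff_of_lt_order k, smul_zero]
    exact (Nat.cast_lt.mpr (by omega)).trans_le (le_order_pow_of_constantCoeff_eq_zero n hτ)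

/-- The series `t / (1 - a t) = t + a t² + a² t³ + ⋯`. -/
noncomputable def moebius (a : F) : F⟦X⟧ := X * rescale a (mk 1)

lemma rescale_mk_one_mul_one_sub (a : F) : rescale a (mk 1) * (1 - C a * X) = 1 := by
  rw [← rescale_X, ← map_one (rescale a), ← map_sub, ← map_mul, mk_one_mul_one_sub_eq_one]

lemma moebius_mul_one_sub (a : F) : moebius a * (1 - C a * X) = X := by
  rw [moebius, mul_assoc, rescale_mk_one_mul_one_sub, mul_one]

lemma eq_moebius_of_mul_one_sub {a : F} {f : F⟦X⟧} (h : f * (1 - C a * X) = X) :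
    f = moebius a := by
  have hu : IsUnit (1 - C a * X) := by
    rw [isUnit_iff_constantCoeff]
    simp
  exact hu.mul_left_injective (h.trans (moebius_mul_one_sub a).symm)

lemma coeff_succ_moebius (a : F) (n : ℕ) : coeff (n + 1) (moebius a) = a ^ n := by
  simp [moebius, coeff_succ_X_mul, coeff_rescale]

lemma constantCoeff_moebius (a : F) : constantCoeff (moebius a) = 0 := by
  simp [moebius]

lemma moebius_zero : moebius (0 : F) = X := by
  simp [moebius, rescale_zero]

lemma moebius_injective : Function.Injective (moebius (F := F)) := by
  intro a b h
  simpa [coeff_succ_moebius] using congrArg (coeff 2) h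

lemma isNott_moebius (a : F) : IsNott (moebius a) :=
  ⟨by simpa using constantCoeff_moebius a, by simpa using coeff_succ_moebius a 0⟩

/-- Substituting `moebius b` into `f * (1 - a t) = t`, where `f = moebius a / t`, and multiplying
by `1 - b t` gives the defining equation of `moebius (a + b)`. -/
lemma ngComp_moebius (a b : F) : ngComp (moebius a) (moebius b) = moebius (a + b) := by
  have hb := HasSubst.of_constantCoeff_zero' (constantCoeff_moebius b)
  rw [ngComp_eq_subst _ (constantCoeff_moebius b), moebius.eq_def a, ← coe_substAlgHom hb,
    map_mul, substAlgHom_X]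
  apply eq_moebius_of_mul_one_sub
  have h := congrArg (substAlgHom hb) (rescale_mk_one_mul_one_sub a)
  rw [map_mul, map_sub, map_one, map_mul, substAlgHom_X, ← algebraMap_eq (R := F),
    AlgHom.commutes] at h
  change _ * (1 - C a * moebius b) = 1 at h
  rw [map_add]
  linear_combination X * h + substAlgHom hb (rescale a (mk 1)) * moebius_mul_one_sub b

lemma coeff_two_ngComp {σ τ : F⟦X⟧} (hσ : coeff 1 σ = 1) (hτ : IsNott τ) :
    coeff 2 (ngComp σ τ) = coeff 2 σ + coeff 2 τ := by
  obtain ⟨hτ0, hτ1⟩ := hτ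
  rw [ngComp, coeff_mk, Finset.sum_range_succ, Finset.sum_range_succ, Finset.sum_range_one,
    pow_zero, pow_one, sq, coeff_mul, Finset.Nat.sum_antidiagonal_eq_sum_range_succ_mk,
    Finset.sum_range_succ, Finset.sum_range_succ, Finset.sum_range_one]
  norm_num [hσ, hτ0, hτ1, coeff_one]
  ring

lemma HasDepth.coeff_ne_zero {σ : F⟦X⟧} {m : ℕ} (h : HasDepth σ m) (hm : m ≠ 0) :
    coeff (m + 1) σ ≠ 0 := by
  simpa [coeff_X, hm] using h.2

lemma hasDepth_one_of_isNott {σ : F⟦X⟧} (hσ : IsNott σ) (h : coeff 2 σ ≠ 0) : HasDepth σ 1 := by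
  obtain ⟨h0, h1⟩ := hσ
  refine ⟨fun i hi => ?_, by simpa [coeff_X] using h⟩
  interval_cases i
  · simpa using h0
  · simp [coeff_X, h1]

lemma hasDepth_moebius {a : F} (ha : a ≠ 0) : HasDepth (moebius a) 1 :=
  hasDepth_one_of_isNott (isNott_moebius a) (by simpa [coeff_succ_moebius] using ha)

end

theorem statement8 (F : Type*) [Field F] [CharP F 2] :
    (∃ σ τ : PowerSeries F, IsNott σ ∧ IsNott τ ∧
      ngComp σ σ = PowerSeries.X ∧ ngComp τ τ = PowerSeries.X ∧
      ngComp σ τ = ngComp τ σ ∧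
      σ ≠ PowerSeries.X ∧ τ ≠ PowerSeries.X ∧ σ ≠ τ ∧
      HasDepth σ 1 ∧ HasDepth τ 1 ∧ HasDepth (ngComp σ τ) 1) ↔
    ∃ x : F, x ≠ 0 ∧ x ≠ 1 := by
  constructor
  · rintro ⟨σ, τ, hσ, hτ, -, -, -, -, -, -, hdσ, hdτ, hdστ⟩
    have ha := hdσ.coeff_ne_zero one_ne_zero
    have hb := hdτ.coeff_ne_zero one_ne_zero
    have hab := hdστ.coeff_ne_zero one_ne_zero
    rw [coeff_two_ngComp hσ.2 hτ, Ne, CharTwo.add_eq_zero] at hab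
    exact ⟨coeff 2 σ / coeff 2 τ, div_ne_zero ha hb, by rwa [Ne, div_eq_one_iff_eq hb]⟩
  · rintro ⟨x, hx0, hx1⟩
    have h1x : 1 + x ≠ 0 := by rwa [Ne, CharTwo.add_eq_zero, eq_comm]
    refine ⟨moebius 1, moebius x, isNott_moebius 1, isNott_moebius x, ?_, ?_, ?_, ?_, ?_, ?_,
      hasDepth_moebius one_ne_zero, hasDepth_moebius hx0, ?_⟩
    · rw [ngComp_moebius, CharTwo.add_self_eq_zero, moebius_zero]
    · rw [ngComp_moebius, CharTwo.add_self_eq_zero, moebius_zero]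
    · rw [ngComp_moebius, ngComp_moebius, add_comm]
    · rw [← moebius_zero]
      exact moebius_injective.ne one_ne_zero
    · rw [← moebius_zero]
      exact moebius_injective.ne hx0
    · exact moebius_injective.ne (Ne.symm hx1)
    · rw [ngComp_moebius]
      exact hasDepth_moebius h1x
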